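/- Let θ ∈ ℂ with |θ| < 1. Then there exists ε > 0 such that for all complex z with |z| < ε one has E(θ,z) · ∑_{ℓ=0}^∞ φ_ℓ(θ) z^ℓ = 1; i.e., the reciprocal power series of the deformed exponential E(θ,·) at z = 0 has coefficients φ_ℓ(θ). -/

import Mathlib

open MeasureTheory Set

/-- The deformed exponential function `E(r,z) = ∑ r^{n(n-1)/2} z^n / n!`. -/
noncomputable def defExp (r z : ℂ) : ℂ :=
  ∑' n : ℕ, r ^ (n * (n - 1) / 2) * z ^ n / (n.factorial : ℂ)

/-- `φ_ℓ(θ)`: the sum over all `ℓ`-profiles `r = (r_1,…,r_ℓ)` (nonnegative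
integers with `∑ i·r_i = ℓ`, so that necessarily `r_i ≤ ℓ`) of
`((∑ r_i)! / (r_1!⋯r_ℓ!)) · ∏_i (−θ^{i(i−1)/2}/i!)^{r_i}`, with `φ_0(θ) := 1`.
Here `i : Fin ℓ` encodes the index `i+1 ∈ {1,…,ℓ}`. -/
noncomputable def phiC (θ : ℂ) : ℕ → ℂ
  | 0 => 1
  | ℓ + 1 =>
    ∑ r ∈ Finset.univ.filter
        (fun r : Fin (ℓ + 1) → Fin (ℓ + 2) =>
          ∑ i : Fin (ℓ + 1), (i.1 + 1) * (r i).1 = ℓ + 1),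
      (((∑ i : Fin (ℓ + 1), (r i).1).factorial : ℂ) /
          ∏ i : Fin (ℓ + 1), ((r i).1.factorial : ℂ)) *
        ∏ i : Fin (ℓ + 1),
          (-(θ ^ ((i.1 + 1) * i.1 / 2)) / (((i.1 + 1).factorial : ℕ) : ℂ)) ^ (r i).1

open Finset Polynomial


noncomputable def aC (θ : ℂ) (n : ℕ) : ℂ := θ ^ (n * (n - 1) / 2) / (n.factorial : ℂ)

lemma aC_zero (θ : ℂ) : aC θ 0 = 1 := by simp [aC]

lemma summable_aC_norm (θ : ℂ) (hθ : ‖θ‖ < 1) (z : ℂ) :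
    Summable fun n => ‖aC θ n * z ^ n‖ := by
  apply Summable.of_nonneg_of_le (fun n => norm_nonneg _)
    (fun n => ?_) (Real.summable_pow_div_factorial ‖z‖)
  have h1 : ‖aC θ n‖ ≤ 1 / (n.factorial : ℝ) := by
    rw [aC, norm_div, norm_pow, Complex.norm_natCast]
    apply div_le_div_of_nonneg_right ?_ ?_ |>.trans_eq rfl
    · exact pow_le_one₀ (norm_nonneg _) hθ.le
    · exact_mod_cast n.factorial_pos.le
  calc ‖aC θ n * z ^ n‖ = ‖aC θ n‖ * ‖z‖ ^ n := by rw [norm_mul, norm_pow]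
    _ ≤ (1 / (n.factorial : ℝ)) * ‖z‖ ^ n := by
        gcongr
    _ = ‖z‖ ^ n / (n.factorial : ℝ) := by ring

lemma defExp_eq (θ z : ℂ) : defExp θ z = ∑' n, aC θ n * z ^ n := by
  unfold defExp aC
  exact tsum_congr fun n => by ring

lemma hasFPowerSeriesAt_defExp (θ : ℂ) (hθ : ‖θ‖ < 1) :
    HasFPowerSeriesAt (defExp θ) (FormalMultilinearSeries.ofScalars ℂ (aC θ)) 0 := by
  rw [hasFPowerSeriesAt_iff]
  filter_upwards with z
  have hc : ∀ n, (FormalMultilinearSeries.ofScalars ℂ (aC θ)).coeff n = aC θ n := by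
    intro n
    simp [FormalMultilinearSeries.ofScalars, FormalMultilinearSeries.coeff,
      List.prod_ofFn]
  simp only [hc, zero_add, smul_eq_mul]
  have := ((summable_aC_norm θ hθ z).of_norm).hasSum
  rw [defExp_eq]
  simpa [mul_comm] using this

lemma defExp_zero (θ : ℂ) : defExp θ 0 = 1 := by
  rw [defExp_eq]
  rw [tsum_eq_single 0 (fun n hn => by simp [zero_pow hn])]
  simp [aC]

noncomputable def PP (θ : ℂ) (m : ℕ) : Polynomial ℂ :=
  ∑ i ∈ Finset.range m, Polynomial.C (-(aC θ (i + 1))) * Polynomial.X ^ (i + 1)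

lemma PP_coeff_zero (θ : ℂ) (m : ℕ) : (PP θ m).coeff 0 = 0 := by
  simp [PP, coeff_X_pow]

lemma coeff_PP_pow (θ : ℂ) (m k j : ℕ) :
    ((PP θ m) ^ k).coeff j =
      ∑ g ∈ (Finset.range m).piAntidiag k,
        if ∑ i ∈ Finset.range m, (i + 1) * g i = j then
          (Nat.multinomial (Finset.range m) g : ℂ) *
            ∏ i ∈ Finset.range m, (-(aC θ (i + 1))) ^ (g i)
        else 0 := by
  rw [PP, Finset.sum_pow_eq_sum_piAntidiag, finset_sum_coeff]
  refine Finset.sum_congr rfl fun g hg => ?_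
  have h1 : ∏ i ∈ Finset.range m, (Polynomial.C (-(aC θ (i + 1))) * Polynomial.X ^ (i + 1)) ^ (g i)
      = Polynomial.C (∏ i ∈ Finset.range m, (-(aC θ (i + 1))) ^ (g i)) *
        Polynomial.X ^ (∑ i ∈ Finset.range m, (i + 1) * g i) := by
    simp_rw [mul_pow, ← Polynomial.C_pow, ← pow_mul]
    rw [Finset.prod_mul_distrib, ← map_prod, Finset.prod_pow_eq_pow_sum]
  rw [h1, ← Polynomial.C_eq_natCast, ← mul_assoc, ← Polynomial.C_mul, Polynomial.coeff_C_mul,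
    Polynomial.coeff_X_pow]
  simp [eq_comm, mul_ite]

lemma coeff_geom_sum (θ : ℂ) (m j : ℕ) (hj : j ≤ m) :
    (∑ k ∈ Finset.range (m + 1), (PP θ m) ^ k).coeff j = phiC θ j := by
  rw [finset_sum_coeff]
  simp_rw [coeff_PP_pow]
  rw [← Finset.sum_sigma (Finset.range (m+1)) (fun k => (Finset.range m).piAntidiag k)
    (fun x : Σ _ : ℕ, ℕ → ℕ =>
      if ∑ i ∈ Finset.range m, (i + 1) * x.2 i = j then
        (Nat.multinomial (Finset.range m) x.2 : ℂ) *
          ∏ i ∈ Finset.range m, (-(aC θ (i + 1))) ^ (x.2 i)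
      else 0)]
  rw [← Finset.sum_filter]
  -- now a sum over the filtered sigma finset
  match j with
  | 0 =>
    have hset : (((Finset.range (m+1)).sigma fun k => (Finset.range m).piAntidiag k).filter
        (fun x : Σ _ : ℕ, ℕ → ℕ => ∑ i ∈ Finset.range m, (i + 1) * x.2 i = 0)) =
        {⟨0, fun _ => 0⟩} := by
      ext x
      simp only [Finset.mem_filter, Finset.mem_sigma, Finset.mem_range, Finset.mem_piAntidiag,
        Finset.mem_singleton]
      constructor
      · rintro ⟨⟨hk, hsum, hsupp⟩, hzero⟩
        have hz : ∀ i, x.2 i = 0 := by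
          intro i
          by_cases hi : i < m
          · have h0 := Finset.sum_eq_zero_iff.mp hzero i (Finset.mem_range.mpr hi)
            exact (Nat.mul_eq_zero.mp h0).resolve_left (Nat.succ_ne_zero i)
          · exact not_ne_iff.mp (mt (hsupp i) (by simpa using hi))
        have hx1 : x.1 = 0 := by rw [← hsum]; exact Finset.sum_eq_zero fun i _ => hz i
        exact Sigma.ext hx1 (heq_of_eq (funext hz))
      · rintro rfl
        simp
    rw [hset]
    simp [phiC, Nat.multinomial]
  | ℓ + 1 =>
    rw [phiC]
    have hb : ∀ x : Σ _ : ℕ, ℕ → ℕ,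
        x ∈ ((Finset.range (m+1)).sigma fun k => (Finset.range m).piAntidiag k).filter
          (fun x : Σ _ : ℕ, ℕ → ℕ => ∑ i ∈ Finset.range m, (i + 1) * x.2 i = ℓ + 1) →
        (∀ n, x.2 n ≤ ℓ + 1) ∧ (∀ n, ℓ + 1 ≤ n → x.2 n = 0) ∧
          (∑ i ∈ Finset.range m, x.2 i = x.1) := by
      intro x hx
      rw [Finset.mem_filter, Finset.mem_sigma, Finset.mem_piAntidiag] at hx
      obtain ⟨⟨hk, hsum, hsupp⟩, hcond⟩ := hx
      have hterm : ∀ n, n < m → (n + 1) * x.2 n ≤ ℓ + 1 := by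
        intro n hn
        rw [← hcond]
        exact Finset.single_le_sum (f := fun i => (i + 1) * x.2 i)
          (fun i _ => Nat.zero_le _) (Finset.mem_range.mpr hn)
      have hle : ∀ n, x.2 n ≤ (n + 1) * x.2 n := fun n =>
        Nat.le_mul_of_pos_left _ n.succ_pos
      have hzero : ∀ n, ℓ + 1 ≤ n → x.2 n = 0 := by
        intro n hn
        by_cases hnm : n < m
        · have h1 := hterm n hnm
          by_contra h
          have h2 : 1 ≤ x.2 n := Nat.one_le_iff_ne_zero.mpr h
          have : (ℓ + 2) * 1 ≤ (n + 1) * x.2 n := Nat.mul_le_mul (by omega) h2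
          omega
        · exact not_ne_iff.mp (mt (hsupp n) (by simpa using hnm))
      refine ⟨fun n => ?_, hzero, hsum⟩
      by_cases hnm : n < m
      · have := hterm n hnm; have := hle n; omega
      · have h0 := not_ne_iff.mp (mt (hsupp n) (by simpa using hnm)); omega
    have hm : ℓ + 1 ≤ m := hj
    refine Finset.sum_nbij' (i := fun (x : Σ _ : ℕ, ℕ → ℕ) =>
        fun i : Fin (ℓ + 1) => (⟨min (x.2 i.1) (ℓ + 1), by omega⟩ : Fin (ℓ + 2)))
      (j := fun (r : Fin (ℓ + 1) → Fin (ℓ + 2)) =>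
        (⟨∑ i : Fin (ℓ + 1), (r i).1, fun n => if h : n < ℓ + 1 then (r ⟨n, h⟩).1 else 0⟩ :
          Σ _ : ℕ, ℕ → ℕ)) ?_ ?_ ?_ ?_ ?_
    · -- maps into target filter
      intro x hx
      obtain ⟨hble, hbzero, hbsum⟩ := hb x hx
      rw [Finset.mem_filter] at hx ⊢
      refine ⟨Finset.mem_univ _, ?_⟩
      have hmin : ∀ i : Fin (ℓ + 1), min (x.2 i.1) (ℓ + 1) = x.2 i.1 := fun i =>
        min_eq_left (hble i.1)
      simp only [hmin]
      rw [Fin.sum_univ_eq_sum_range (fun n => (n + 1) * x.2 n) (ℓ + 1)]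
      rw [Finset.sum_subset (Finset.range_subset_range.mpr hm)
        (fun n _ hn => by rw [hbzero n (by simpa using hn)]; ring)]
      exact hx.2
    · -- inverse maps into source
      intro r hr
      rw [Finset.mem_filter] at hr
      have hcond := hr.2
      have hgsum : ∀ F : ℕ → ℕ → ℕ, (∀ n, F n 0 = 0) →
          ∑ n ∈ Finset.range m,
              F n (if h : n < ℓ + 1 then ((r ⟨n, h⟩ : Fin (ℓ + 2)) : ℕ) else 0) =
            ∑ i : Fin (ℓ + 1), F i.1 (r i).1 := by
        intro F hF
        rw [← Finset.sum_subset (Finset.range_subset_range.mpr hm)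
          (fun n _ hn => by rw [dif_neg (by simpa using hn), hF])]
        rw [← Fin.sum_univ_eq_sum_range
          (fun n => F n (if h : n < ℓ + 1 then ((r ⟨n, h⟩ : Fin (ℓ + 2)) : ℕ) else 0)) (ℓ + 1)]
        exact Finset.sum_congr rfl fun i _ => by rw [dif_pos i.isLt]
      simp only [Finset.mem_filter, Finset.mem_sigma, Finset.mem_range, Finset.mem_piAntidiag]
      refine ⟨⟨?_, ?_, ?_⟩, ?_⟩
      · have h1 : ∑ i : Fin (ℓ + 1), ((r i : Fin (ℓ + 2)) : ℕ) ≤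
            ∑ i : Fin (ℓ + 1), (i.1 + 1) * (r i).1 :=
          Finset.sum_le_sum fun i _ => Nat.le_mul_of_pos_left _ i.1.succ_pos
        omega
      · exact hgsum (fun n v => v) (fun n => rfl)
      · intro n hn
        by_cases h : n < ℓ + 1
        · omega
        · rw [dif_neg h] at hn; exact absurd rfl hn
      · exact (hgsum (fun n v => (n + 1) * v) (fun n => by ring)).trans hcond
    · -- left inverse
      intro x hx
      obtain ⟨hble, hbzero, hbsum⟩ := hb x hx
      have hmin : ∀ n : ℕ, min (x.2 n) (ℓ + 1) = x.2 n := fun n => min_eq_left (hble n)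
      refine Sigma.ext ?_ (heq_of_eq (funext fun n => ?_))
      · show (∑ i : Fin (ℓ + 1), min (x.2 i.1) (ℓ + 1)) = x.1
        simp only [hmin]
        rw [Fin.sum_univ_eq_sum_range (fun n => x.2 n) (ℓ + 1)]
        rw [Finset.sum_subset (Finset.range_subset_range.mpr hm)
          (fun n _ hn => hbzero n (by simpa using hn))]
        exact hbsum
      · show (if h : n < ℓ + 1 then min (x.2 n) (ℓ + 1) else 0) = x.2 n
        by_cases h : n < ℓ + 1
        · rw [dif_pos h]; exact hmin n
        · rw [dif_neg h]; exact (hbzero n (by omega)).symm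
    · -- right inverse
      intro r hr
      funext i
      apply Fin.ext
      simp only [dif_pos i.isLt]
      have hle : (r i).1 ≤ ℓ + 1 := by omega
      simp [min_eq_left hle]
    · -- values agree
      intro x hx
      obtain ⟨hble, hbzero, hbsum⟩ := hb x hx
      have hmin : ∀ i : Fin (ℓ + 1), min (x.2 i.1) (ℓ + 1) = x.2 i.1 := fun i =>
        min_eq_left (hble i.1)
      simp only [hmin]
      have hsum1 : ∑ i ∈ Finset.range m, x.2 i = ∑ i : Fin (ℓ + 1), x.2 i.1 := by
        rw [← Finset.sum_subset (Finset.range_subset_range.mpr hm)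
          (fun n _ hn => hbzero n (by simpa using hn))]
        rw [← Fin.sum_univ_eq_sum_range (fun n => x.2 n) (ℓ + 1)]
      have hprodfact : ∏ i ∈ Finset.range m, ((x.2 i).factorial : ℂ) =
          ∏ i : Fin (ℓ + 1), ((x.2 i.1).factorial : ℂ) := by
        rw [← Finset.prod_subset (Finset.range_subset_range.mpr hm)
          (fun n _ hn => by rw [hbzero n (by simpa using hn)]; simp)]
        rw [← Fin.prod_univ_eq_prod_range (fun n => ((x.2 n).factorial : ℂ)) (ℓ + 1)]
      have hprodpow : ∏ i ∈ Finset.range m, (-(aC θ (i + 1))) ^ (x.2 i) =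
          ∏ i : Fin (ℓ + 1), (-(aC θ (i.1 + 1))) ^ (x.2 i.1) := by
        rw [← Finset.prod_subset (Finset.range_subset_range.mpr hm)
          (fun n _ hn => by rw [hbzero n (by simpa using hn)]; simp)]
        rw [← Fin.prod_univ_eq_prod_range (fun n => (-(aC θ (n + 1))) ^ (x.2 n)) (ℓ + 1)]
      have hfacne : (∏ i : Fin (ℓ + 1), ((x.2 i.1).factorial : ℂ)) ≠ 0 :=
        Finset.prod_ne_zero_iff.mpr fun i _ => by
          exact_mod_cast (x.2 i.1).factorial_ne_zero
      have hmult : (Nat.multinomial (Finset.range m) x.2 : ℂ) =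
          ((∑ i : Fin (ℓ + 1), x.2 i.1).factorial : ℂ) /
            ∏ i : Fin (ℓ + 1), ((x.2 i.1).factorial : ℂ) := by
        rw [eq_div_iff hfacne]
        rw [← hprodfact, ← hsum1]
        have hspec := Nat.multinomial_spec (Finset.range m) x.2
        push_cast [← hspec]
        ring
      rw [hmult, hprodpow]
      congr 1
      refine Finset.prod_congr rfl fun i _ => ?_
      simp [aC, neg_div, Nat.add_sub_cancel]

lemma PP_coeff (θ : ℂ) (m k : ℕ) (hk : k ≤ m) :
    (PP θ m).coeff k = if k = 0 then 0 else -(aC θ k) := by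
  match k with
  | 0 => simpa using PP_coeff_zero θ m
  | k + 1 =>
    rw [PP, finset_sum_coeff]
    simp only [coeff_C_mul, coeff_X_pow]
    rw [Finset.sum_eq_single k]
    · simp
    · intro i _ hik
      simp [Nat.succ_ne_succ.mpr (Ne.symm hik), Ne.symm hik]
    · intro hkm
      exact absurd (Finset.mem_range.mpr (by omega)) hkm

lemma recursion_phi (θ : ℂ) (ℓ : ℕ) :
    ∑ kl ∈ Finset.HasAntidiagonal.antidiagonal ℓ, aC θ kl.1 * phiC θ kl.2 =
      if ℓ = 0 then 1 else 0 := by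
  match ℓ with
  | 0 => simp [phiC, aC_zero]
  | ℓ + 1 =>
    simp only [Nat.succ_ne_zero, if_false]
    set G : Polynomial ℂ := ∑ k ∈ Finset.range (ℓ + 2), (PP θ (ℓ + 1)) ^ k with hG
    have hgeom : (1 - PP θ (ℓ + 1)) * G = 1 - (PP θ (ℓ + 1)) ^ (ℓ + 2) := by
      have := geom_sum_mul (PP θ (ℓ + 1)) (ℓ + 2)
      rw [hG]
      linear_combination -this
    have hdvd : (Polynomial.X : Polynomial ℂ) ^ (ℓ + 2) ∣ (PP θ (ℓ + 1)) ^ (ℓ + 2) :=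
      pow_dvd_pow_of_dvd (Polynomial.X_dvd_iff.mpr (PP_coeff_zero θ (ℓ + 1))) _
    have hcoeffpow : ((PP θ (ℓ + 1)) ^ (ℓ + 2)).coeff (ℓ + 1) = 0 := by
      obtain ⟨q, hq⟩ := hdvd
      rw [hq, mul_comm, Polynomial.coeff_mul_X_pow']
      simp
    have h0 : ((1 - PP θ (ℓ + 1)) * G).coeff (ℓ + 1) = 0 := by
      rw [hgeom, Polynomial.coeff_sub, hcoeffpow, Polynomial.coeff_one]
      simp
    rw [Polynomial.coeff_mul] at h0
    rw [← h0]
    refine (Finset.sum_congr rfl fun kl hkl => ?_).symm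
    rw [Finset.HasAntidiagonal.mem_antidiagonal] at hkl
    have hk1 : kl.1 ≤ ℓ + 1 := by omega
    have hk2 : kl.2 ≤ ℓ + 1 := by omega
    rw [Polynomial.coeff_sub, Polynomial.coeff_one, PP_coeff θ _ _ hk1,
      coeff_geom_sum θ _ _ hk2]
    congr 1
    by_cases h : kl.1 = 0
    · simp [h, aC_zero]
    · simp [h, aC]

lemma coeff_ofScalars (c : ℕ → ℂ) (n : ℕ) :
    (FormalMultilinearSeries.ofScalars ℂ c).coeff n = c n := by
  simp [FormalMultilinearSeries.ofScalars, FormalMultilinearSeries.coeff, List.prod_ofFn]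

theorem reciprocal_deformed_exponential (θ : ℂ) (hθ : ‖θ‖ < 1) :
    ∃ ε > 0, ∀ z : ℂ, ‖z‖ < ε →
      defExp θ z * ∑' ℓ : ℕ, phiC θ ℓ * z ^ ℓ = 1 := by
  have hE := hasFPowerSeriesAt_defExp θ hθ
  have hE0 : defExp θ 0 = 1 := defExp_zero θ
  have hinv : AnalyticAt ℂ (fun z => (defExp θ z)⁻¹) 0 :=
    (hE.analyticAt).inv (by rw [hE0]; exact one_ne_zero)
  obtain ⟨p, hp⟩ := hinv
  set c : ℕ → ℂ := p.coeff with hc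
  -- eventual nonvanishing of defExp
  have hne : ∀ᶠ z in nhds (0 : ℂ), defExp θ z ≠ 0 := by
    have hcont : ContinuousAt (defExp θ) 0 := hE.analyticAt.continuousAt
    exact hcont.eventually_ne (by rw [hE0]; exact one_ne_zero)
  -- the inverse sums to (defExp θ z)⁻¹ eventually
  have hsum_inv : ∀ᶠ z in nhds (0 : ℂ),
      HasSum (fun n => z ^ n • c n) ((defExp θ z)⁻¹) := by
    have := hasFPowerSeriesAt_iff.mp hp
    simpa using this
  -- summability of norms of c-series eventually
  obtain ⟨r, hpr⟩ := hp
  have hrpos : (0 : ENNReal) < r := hpr.r_pos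
  have hsummc : ∀ᶠ z in nhds (0 : ℂ), Summable fun n => ‖c n * z ^ n‖ := by
    have hball : ∀ᶠ z in nhds (0 : ℂ), z ∈ Metric.eball (0 : ℂ) r :=
      Metric.eball_mem_nhds 0 hrpos
    filter_upwards [hball] with z hz
    have hlt : (‖z‖₊ : ENNReal) < p.radius := by
      have : edist z 0 < r := by simpa [Metric.mem_eball] using hz
      calc (‖z‖₊ : ENNReal) = edist z 0 := by exact (edist_zero_right z).symm
        _ < r := this
        _ ≤ p.radius := hpr.r_le
    have := p.summable_norm_mul_pow hlt
    apply Summable.congr this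
    intro n
    rw [FormalMultilinearSeries.norm_apply_eq_norm_coef]
    rw [norm_mul, norm_pow]
    simp [← hc]
  -- Cauchy product: the series with coefficients d sums to 1 eventually
  set d : ℕ → ℂ := fun ℓ => ∑ kl ∈ Finset.HasAntidiagonal.antidiagonal ℓ, aC θ kl.1 * c kl.2 with hd
  have hq : HasFPowerSeriesAt (fun _ : ℂ => (1 : ℂ))
      (FormalMultilinearSeries.ofScalars ℂ d) 0 := by
    rw [hasFPowerSeriesAt_iff]
    filter_upwards [hne, hsum_inv, hsummc] with z hzne hzsum hzsummc
    simp only [coeff_ofScalars]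
    have hfnorm : Summable fun n => ‖aC θ n * z ^ n‖ := summable_aC_norm θ hθ z
    have hprod := tsum_mul_tsum_eq_tsum_sum_antidiagonal_of_summable_norm hfnorm hzsummc
    have hEz : ∑' n, aC θ n * z ^ n = defExp θ z := (defExp_eq θ z).symm
    have hcz : ∑' n, c n * z ^ n = (defExp θ z)⁻¹ := by
      rw [← hzsum.tsum_eq]
      exact tsum_congr fun n => by rw [smul_eq_mul]; ring
    rw [hEz, hcz, mul_inv_cancel₀ hzne] at hprod
    -- rearrange the inner sums
    have hinner : ∀ ℓ : ℕ, ∑ kl ∈ Finset.HasAntidiagonal.antidiagonal ℓ,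
        (aC θ kl.1 * z ^ kl.1) * (c kl.2 * z ^ kl.2) = z ^ ℓ • d ℓ := by
      intro ℓ
      rw [hd, smul_eq_mul, Finset.mul_sum]
      refine Finset.sum_congr rfl fun kl hkl => ?_
      rw [Finset.HasAntidiagonal.mem_antidiagonal] at hkl
      rw [← hkl, pow_add]
      ring
    rw [show (fun n => ∑ kl ∈ Finset.HasAntidiagonal.antidiagonal n, (aC θ kl.1 * z ^ kl.1) *
        (c kl.2 * z ^ kl.2)) = (fun n => z ^ n • d n) from funext hinner] at hprod
    have hsummd : Summable fun n => z ^ n • d n := by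
      have := summable_norm_sum_mul_antidiagonal_of_summable_norm hfnorm hzsummc
      have h2 := this.of_norm
      rwa [show (fun n => ∑ kl ∈ Finset.HasAntidiagonal.antidiagonal n, (aC θ kl.1 * z ^ kl.1) *
        (c kl.2 * z ^ kl.2)) = (fun n => z ^ n • d n) from funext hinner] at h2
    exact hsummd.hasSum_iff.mpr hprod.symm
  have hone : HasFPowerSeriesAt (fun _ : ℂ => (1 : ℂ))
      (FormalMultilinearSeries.ofScalars ℂ (fun n => if n = 0 then (1:ℂ) else 0)) 0 := by
    rw [hasFPowerSeriesAt_iff]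
    filter_upwards with z
    simp only [coeff_ofScalars]
    have := hasSum_single (f := fun n => z ^ n • (if n = 0 then (1 : ℂ) else 0)) 0
      (fun b hb => by simp [hb])
    simpa using this
  have hd_eq : ∀ ℓ, d ℓ = if ℓ = 0 then 1 else 0 := by
    intro ℓ
    have := hq.eq_formalMultilinearSeries hone
    have := congrArg (fun q => FormalMultilinearSeries.coeff q ℓ) this
    simpa [coeff_ofScalars] using this
  -- c = phiC by strong induction
  have hceq : ∀ ℓ, c ℓ = phiC θ ℓ := by
    intro ℓ
    induction ℓ using Nat.strong_induction_on with
    | _ ℓ ih =>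
      match ℓ, ih with
      | 0, _ =>
        have h0 := hd_eq 0
        rw [hd] at h0
        simp only at h0
        simp only [Finset.Nat.antidiagonal_zero, Finset.sum_singleton, aC_zero, one_mul,
          if_pos rfl] at h0
        simpa [phiC] using h0
      | ℓ + 1, ih =>
        have h1 := hd_eq (ℓ + 1)
        have h2 := recursion_phi θ (ℓ + 1)
        rw [hd] at h1
        simp only at h1
        rw [Finset.Nat.sum_antidiagonal_succ] at h1 h2
        simp only [Nat.succ_ne_zero, if_false] at h1 h2
        have hsums : ∑ kl ∈ Finset.HasAntidiagonal.antidiagonal ℓ, aC θ (kl.1 + 1) * c kl.2 =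
            ∑ kl ∈ Finset.HasAntidiagonal.antidiagonal ℓ, aC θ (kl.1 + 1) * phiC θ kl.2 := by
          refine Finset.sum_congr rfl fun kl hkl => ?_
          rw [Finset.HasAntidiagonal.mem_antidiagonal] at hkl
          rw [ih kl.2 (by omega)]
        rw [aC_zero, one_mul] at h1 h2
        rw [hsums] at h1
        linear_combination h1 - h2
  have hfinal : ∀ᶠ z in nhds (0:ℂ), defExp θ z * ∑' ℓ : ℕ, phiC θ ℓ * z ^ ℓ = 1 := by
    filter_upwards [hne, hsum_inv] with z hzne hzsum
    have htsum : ∑' ℓ : ℕ, phiC θ ℓ * z ^ ℓ = (defExp θ z)⁻¹ := by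
      rw [← hzsum.tsum_eq]
      refine tsum_congr fun n => ?_
      rw [smul_eq_mul, hceq n]
      ring
    rw [htsum, mul_inv_cancel₀ hzne]
  obtain ⟨ε, hε, h⟩ := Metric.eventually_nhds_iff.mp hfinal
  exact ⟨ε, hε, fun z hz => h (by simpa using hz)⟩
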